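/- For every positive integer m, the Bernoulli number B_{2m} satisfies the recursion B_{2m} = ((2m)! · 2^{-2m} / (1 - 2^{1-2m})) · Σ_{n=1}^{m} B_{2m-2n} · (2 - 2^{2m-2n}) / ((2m-2n)! · (2n+1)!). -/

import Mathlib

open Finset Nat

/-! By the reflection `B_n(1 - x) = (-1)^n B_n(x)`, `B_n(1/2) = 0` for odd `n`. Expanding
`2^n B_n(1/2) = ∑ C(n,i) B_i 2^i` and combining it with `∑_{i ≤ n} C(n,i) B_i = 0` gives
`∑ C(n,i) B_i (2 - 2^i) = 0` for odd `n > 1`. For `n = 2m+1` only even `i` contribute; dividing by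
`(2m+1)!`, the term `i = 2m` is `B_{2m}(2 - 2^{2m}) / (2m)!` and the others form the sum in the
recursion. -/

theorem Finset.sum_range_two_mul {M : Type*} [AddCommMonoid M] (f : ℕ → M) (k : ℕ) :
    ∑ j ∈ range (2 * k), f j = ∑ i ∈ range k, (f (2 * i) + f (2 * i + 1)) := by
  induction k with
  | zero => simp
  | succ k ih => rw [mul_add_one, sum_range_succ, sum_range_succ, ih, sum_range_succ, add_assoc]

theorem Polynomial.bernoulli_eval_half_of_odd {n : ℕ} (hn : Odd n) :
    (Polynomial.bernoulli n).eval (1 / 2 : ℚ) = 0 := by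
  have h := Polynomial.bernoulli_eval_one_sub n (1 / 2)
  rw [hn.neg_one_pow, show (1 : ℚ) - 1 / 2 = 1 / 2 by norm_num] at h
  linarith

theorem sum_choose_mul_bernoulli_mul_two_pow_of_odd {n : ℕ} (hn : Odd n) :
    ∑ i ∈ range (n + 1), (n.choose i : ℚ) * bernoulli i * 2 ^ i = 0 := by
  have h := Polynomial.bernoulli_eval_half_of_odd hn
  rw [Polynomial.bernoulli, Polynomial.eval_finsetSum] at h
  simp only [Polynomial.eval_monomial] at h
  calc ∑ i ∈ range (n + 1), (n.choose i : ℚ) * bernoulli i * 2 ^ i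
      = 2 ^ n * ∑ i ∈ range (n + 1), bernoulli i * n.choose i * (1 / 2 : ℚ) ^ (n - i) := by
        rw [mul_sum]
        refine sum_congr rfl fun i hi => ?_
        obtain ⟨k, rfl⟩ := Nat.exists_eq_add_of_le (Nat.lt_succ_iff.mp (mem_range.mp hi))
        rw [Nat.add_sub_cancel_left, pow_add, one_div_pow]
        field_simp
    _ = 0 := by rw [h, mul_zero]

theorem sum_choose_mul_bernoulli_mul_two_sub_two_pow_of_odd {n : ℕ} (hn : Odd n) (h1 : 1 < n) :
    ∑ i ∈ range (n + 1), (n.choose i : ℚ) * bernoulli i * (2 - 2 ^ i) = 0 := by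
  simp_rw [mul_sub, sum_sub_distrib, sum_choose_mul_bernoulli_mul_two_pow_of_odd hn, sub_zero]
  rw [← sum_mul, sum_range_succ, sum_bernoulli, if_neg h1.ne', choose_self,
    bernoulli_eq_zero_of_odd hn h1]
  simp

theorem sum_choose_mul_bernoulli_two_mul_mul_two_sub_two_pow {m : ℕ} (hm : 0 < m) :
    ∑ i ∈ range (m + 1),
      ((2 * m + 1).choose (2 * i) : ℚ) * bernoulli (2 * i) * (2 - 2 ^ (2 * i)) = 0 := by
  have h := sum_choose_mul_bernoulli_mul_two_sub_two_pow_of_odd (odd_two_mul_add_one m)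
    (by omega)
  rw [show 2 * m + 1 + 1 = 2 * (m + 1) by ring, sum_range_two_mul] at h
  rw [← h]
  refine sum_congr rfl fun i _ => ?_
  have hodd : bernoulli (2 * i + 1) * (2 - 2 ^ (2 * i + 1)) = 0 := by
    rcases i.eq_zero_or_pos with rfl | hi
    · norm_num
    · rw [bernoulli_eq_zero_of_odd (odd_two_mul_add_one i) (by omega), zero_mul]
  rw [mul_assoc _ (bernoulli (2 * i + 1)), hodd, mul_zero, add_zero]

theorem sum_bernoulli_two_mul_sub_div_factorial_eq_zero {m : ℕ} (hm : 0 < m) :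
    ∑ n ∈ range (m + 1), bernoulli (2 * m - 2 * n) * (2 - (2 : ℚ) ^ (2 * m - 2 * n)) /
      (((2 * m - 2 * n)! : ℚ) * ((2 * n + 1)! : ℚ)) = 0 := by
  rw [← sum_range_reflect, ← zero_div ((2 * m + 1)! : ℚ),
    ← sum_choose_mul_bernoulli_two_mul_mul_two_sub_two_pow hm, sum_div]
  refine sum_congr rfl fun i hi => ?_
  have hi : i ≤ m := Nat.lt_succ_iff.mp (mem_range.mp hi)
  rw [Nat.add_sub_cancel, show 2 * m - 2 * (m - i) = 2 * i by omega,
    show 2 * (m - i) + 1 = 2 * m + 1 - 2 * i by omega, Nat.cast_choose ℚ (by omega)]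
  field_simp

/-- For every positive integer `m`, the Bernoulli number `B_{2m}` satisfies
`B_{2m} = ((2m)! 2^(-2m) / (1 - 2^(1-2m))) ·
  Σ_{n=1}^{m} B_{2m-2n} (2 - 2^(2m-2n)) / ((2m-2n)! (2n+1)!)`. -/
theorem stmt_3 (m : ℕ) (hm : 0 < m) :
    bernoulli (2 * m) =
      ((2 * m)! : ℚ) * (2 : ℚ) ^ (-(2 * (m : ℤ))) / (1 - (2 : ℚ) ^ (1 - 2 * (m : ℤ))) *
        ∑ n ∈ Finset.Icc 1 m,
          bernoulli (2 * m - 2 * n) * (2 - (2 : ℚ) ^ (2 * m - 2 * n)) /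
            (((2 * m - 2 * n)! : ℚ) * ((2 * n + 1)! : ℚ)) := by
  have h := sum_bernoulli_two_mul_sub_div_factorial_eq_zero hm
  rw [range_eq_Ico, sum_eq_sum_Ico_succ_bot (by omega), zero_add,
    Ico_add_one_right_eq_Icc] at h
  rw [eq_neg_of_add_eq_zero_right h]
  have hx : (2 : ℚ) ^ (2 * m) ≠ 2 ^ 1 :=
    (pow_right_injective₀ two_pos (by norm_num)).ne (by omega)
  rw [show 2 * (m : ℤ) = (2 * m : ℕ) by push_cast; rfl, zpow_neg, zpow_sub₀ two_ne_zero,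
    zpow_natCast, zpow_one, Nat.mul_zero, Nat.sub_zero, zero_add, factorial_one, cast_one, mul_one]
  field_simp [sub_ne_zero.mpr (pow_one (2 : ℚ) ▸ hx)]
  ring
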